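/- Let ε ∈ [0, 1/2] and v ∈ {−ε, ε}^D with ∑_{i=1}^D v_i = 0. Let P be the uniform categorical distribution (1/D, …, 1/D) and Q = ((1+v₁)/D, …, (1+v_D)/D). Then KL(P, Q) ≤ 2ε² and KL(Q, P) ≤ 2ε². -/

import Mathlib

theorem stmt7 (D : ℕ) (hD : 0 < D) (ε : ℝ) (hε : ε ∈ Set.Icc (0 : ℝ) (1/2))
    (v : Fin D → ℝ) (hv : ∀ i, v i = -ε ∨ v i = ε) (hsum : ∑ i, v i = 0) :
    (∑ i, (1 / D : ℝ) * Real.log ((1 / D) / ((1 + v i) / D)) ≤ 2 * ε ^ 2) ∧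
    (∑ i, ((1 + v i) / D : ℝ) * Real.log (((1 + v i) / D) / (1 / D)) ≤ 2 * ε ^ 2) := by
  obtain ⟨hε0, hε2⟩ := hε
  have hDpos : (0:ℝ) < D := by exact_mod_cast hD
  have hpos : ∀ i, 0 < 1 + v i := by
    intro i; rcases hv i with h | h <;> rw [h] <;> linarith
  have hrw1 : ∀ i, (1 / D : ℝ) / ((1 + v i) / D) = (1 + v i)⁻¹ := by
    intro i
    field_simp
  have hrw2 : ∀ i, ((1 + v i) / D : ℝ) / (1 / D) = 1 + v i := by
    intro i
    field_simp
  have hsq : ∀ i, v i ^ 2 = ε ^ 2 := by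
    intro i; rcases hv i with h | h <;> rw [h] <;> ring
  constructor
  · -- KL(P,Q)
    have key : ∑ i, (1 / D : ℝ) * Real.log ((1 / D) / ((1 + v i) / D))
        = -(1/D) * ∑ i, Real.log (1 + v i) := by
      rw [Finset.mul_sum]
      refine Finset.sum_congr rfl fun i _ => ?_
      rw [hrw1 i, Real.log_inv]; ring
    rw [key]
    rcases eq_or_lt_of_le hε0 with h0 | hεpos
    · have : ∀ i, v i = 0 := by
        intro i; rcases hv i with h | h <;> rw [h, ← h0] <;> ring
      simp [this, ← h0]
    · set S := Finset.univ.filter (fun i => v i = ε) with hS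
      have hcomp : ∀ i ∈ Finset.univ.filter (fun i => ¬ v i = ε), v i = -ε := by
        intro i hi
        simp only [Finset.mem_filter] at hi
        rcases hv i with h | h
        · exact h
        · exact absurd h hi.2
      have hsplit : ∀ (f : Fin D → ℝ), ∑ i, f i =
          ∑ i ∈ S, f i + ∑ i ∈ Finset.univ.filter (fun i => ¬ v i = ε), f i := by
        intro f; rw [Finset.sum_filter_add_sum_filter_not]
      have hcard : (Finset.univ.filter (fun i => ¬ v i = ε)).card = D - S.card := by
        rw [Finset.filter_not, Finset.card_sdiff_of_subset (Finset.filter_subset _ _), Finset.card_univ,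
          Fintype.card_fin]
      have hnle : S.card ≤ D := by
        simpa using Finset.card_filter_le Finset.univ (fun i => v i = ε)
      have hsum2 : (S.card : ℝ) * ε + (D - S.card : ℝ) * (-ε) = 0 := by
        have := hsplit v
        rw [hsum] at this
        rw [Finset.sum_congr rfl (fun i hi => (Finset.mem_filter.mp hi).2)] at this
        rw [Finset.sum_congr rfl hcomp] at this
        simp only [Finset.sum_const, nsmul_eq_mul, hcard] at this
        rw [Nat.cast_sub hnle] at this
        linarith
      have hn : (S.card : ℝ) = D / 2 := by
        have : ((2 : ℝ) * S.card - D) * ε = 0 := by ring_nf; ring_nf at hsum2; linarith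
        rcases mul_eq_zero.mp this with h | h
        · linarith
        · exact absurd h (ne_of_gt hεpos)
      have hA : ∑ i ∈ S, Real.log (1 + v i) = (S.card : ℝ) * Real.log (1 + ε) := by
        rw [Finset.sum_congr rfl (fun i hi => by rw [(Finset.mem_filter.mp hi).2] : ∀ i ∈ S, Real.log (1 + v i) = Real.log (1 + ε)), Finset.sum_const, nsmul_eq_mul]
      have hB : ∑ i ∈ Finset.univ.filter (fun i => ¬ v i = ε), Real.log (1 + v i)
          = ((D : ℝ) - S.card) * Real.log (1 - ε) := by
        rw [Finset.sum_congr rfl (fun i hi => by rw [hcomp i hi]; congr 1 :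
          ∀ i ∈ Finset.univ.filter (fun i => ¬ v i = ε), Real.log (1 + v i) = Real.log (1 - ε)),
          Finset.sum_const, nsmul_eq_mul, hcard, Nat.cast_sub hnle]
      have hlogsum : ∑ i, Real.log (1 + v i) = (D / 2) * Real.log ((1 + ε) * (1 - ε)) := by
        rw [hsplit (fun i => Real.log (1 + v i)), hA, hB, hn,
          Real.log_mul (by linarith) (by linarith)]
        ring
      rw [hlogsum]
      have ht : (0:ℝ) < (1 + ε) * (1 - ε) := by nlinarith
      have h1 : Real.log ((1 + ε) * (1 - ε))⁻¹ ≤ ((1 + ε) * (1 - ε))⁻¹ - 1 :=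
        Real.log_le_sub_one_of_pos (inv_pos.mpr ht)
      rw [Real.log_inv] at h1
      have h2 : ((1 + ε) * (1 - ε))⁻¹ * ((1 + ε) * (1 - ε)) = 1 :=
        inv_mul_cancel₀ (ne_of_gt ht)
      have h3 : (1 + ε) * (1 - ε) ≥ 3/4 := by nlinarith
      have h4 : ((1 + ε) * (1 - ε))⁻¹ ≤ 4/3 := by nlinarith [inv_pos.mpr ht]
      have h5 : -Real.log ((1 + ε) * (1 - ε)) ≤ 4 * ε ^ 2 := by nlinarith
      have hD2 : -(1/(D:ℝ)) * ((D / 2) * Real.log ((1 + ε) * (1 - ε)))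
          = -(1/2) * Real.log ((1 + ε) * (1 - ε)) := by
        field_simp
      rw [hD2]
      nlinarith
  · -- KL(Q,P)
    have key : ∀ i, ((1 + v i) / D : ℝ) * Real.log (((1 + v i) / D) / (1 / D))
        ≤ (v i + v i ^ 2) / D := by
      intro i
      rw [hrw2 i]
      have hl : Real.log (1 + v i) ≤ v i := by
        have := Real.log_le_sub_one_of_pos (hpos i)
        linarith
      have h0 : (0:ℝ) ≤ (1 + v i) / D := le_of_lt (div_pos (hpos i) hDpos)
      calc ((1 + v i) / D : ℝ) * Real.log (1 + v i) ≤ ((1 + v i) / D) * v i :=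
            mul_le_mul_of_nonneg_left hl h0
        _ = (v i + v i ^ 2) / D := by ring
    calc ∑ i, ((1 + v i) / D : ℝ) * Real.log (((1 + v i) / D) / (1 / D))
        ≤ ∑ i, (v i + v i ^ 2) / D := Finset.sum_le_sum (fun i _ => key i)
      _ = (∑ i, v i + ∑ i, v i ^ 2) / D := by
          rw [← Finset.sum_add_distrib, ← Finset.sum_div]
      _ = (∑ i, (ε:ℝ) ^ 2) / D := by rw [hsum, zero_add]; congr 1; exact Finset.sum_congr rfl fun i _ => hsq i
      _ = ε ^ 2 := by
          rw [Finset.sum_const, Finset.card_univ, Fintype.card_fin, nsmul_eq_mul]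
          field_simp
      _ ≤ 2 * ε ^ 2 := by nlinarith
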